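/- arXiv:0912.2710 — 2 statements merged into one kernel-verified Lean document; each statement's English description precedes it below -/
import Mathlib

section
/- For the scale model, if (A.1) ∫|u ṗ(u)| du < ∞, (A.4) sup_x |(∂/∂θ)log p(θ₀^{-1}x) · (p(α^{-1}x)/p(θ₀^{-1}x))^γ| < ∞, and, depending on sign, (A.2) sup_x p(α^{-1}x)/p(θ₀^{-1}x) < ∞ when γ > 0 or (A.3) sup_x p(θ₀^{-1}x)/p(α^{-1}x) < ∞ when γ < 0, then the function x ↦ (p_α(x)/p_{θ₀}(x))^γ · ṗ_{θ₀}(x)/p_{θ₀}(x) is bounded, hence the influence function IF(x;T_α,P_{θ₀}) is bounded in x (B-robustness). -/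
open MeasureTheory

/-! With `r = p(x/α)/p(x/θ₀)`, the chain rule gives `L x = -(x/θ₀²)·p'(x/θ₀)/p(x/θ₀)`, and the
weighted score rearranges to `w x = (θ₀/α)^γ·(r^γ·L x − r^γ/θ₀)`. The first term is bounded by
(A.4); the second by (A.2) when `γ > 0`, or by (A.3) applied to `r^γ = (1/r)^(-γ)` when `γ < 0`. -/

lemma exists_forall_div_rpow_le {ι : Type*} {f g : ι → ℝ} (hf : ∀ i, 0 ≤ f i) (hg : ∀ i, 0 ≤ g i)
    {γ : ℝ} (h : (0 < γ ∧ ∃ M, ∀ i, f i / g i ≤ M) ∨ (γ < 0 ∧ ∃ M, ∀ i, g i / f i ≤ M)) :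
    ∃ R, ∀ i, (f i / g i) ^ γ ≤ R := by
  rcases h with ⟨hγ, M, hM⟩ | ⟨hγ, M, hM⟩
  · exact ⟨M ^ γ, fun i => Real.rpow_le_rpow (div_nonneg (hf i) (hg i)) (hM i) hγ.le⟩
  · refine ⟨M ^ (-γ), fun i => ?_⟩
    have hr : 0 ≤ g i / f i := div_nonneg (hg i) (hf i)
    have h_inv : (f i / g i) ^ γ = (g i / f i) ^ (-γ) := by
      rw [Real.rpow_neg hr, ← Real.inv_rpow hr, inv_div]
    rw [h_inv]
    exact Real.rpow_le_rpow hr (hM i) (neg_nonneg.mpr hγ.le)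

lemma hasDerivAt_log_comp_div {p : ℝ → ℝ} {d x θ : ℝ} (hp : HasDerivAt p d (x / θ))
    (hpx : p (x / θ) ≠ 0) (hθ : θ ≠ 0) :
    HasDerivAt (fun t : ℝ => Real.log (p (x / t))) (-(x / θ ^ 2) * d / p (x / θ)) θ := by
  have h_div : HasDerivAt (fun t : ℝ => x / t) (-(x / θ ^ 2)) θ := by
    simpa [div_eq_mul_inv, mul_neg] using (hasDerivAt_inv hθ).const_mul x
  have := (hp.comp θ h_div).log hpx
  rwa [mul_comm d] at this

lemma scale_weighted_score_eq {a b d x θ₀ α γ : ℝ} (ha : 0 < a) (hb : 0 < b) (hθ₀ : 0 < θ₀)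
    (hα : 0 < α) :
    ((a / α) / (b / θ₀)) ^ γ * ((-(1 / θ₀ ^ 2) * (b + (x / θ₀) * d)) / (b / θ₀)) =
      (θ₀ / α) ^ γ * ((a / b) ^ γ * (-(x / θ₀ ^ 2) * d / b) - (a / b) ^ γ / θ₀) := by
  have h_split : (a / α) / (b / θ₀) = (θ₀ / α) * (a / b) := by field_simp
  rw [h_split, Real.mul_rpow (by positivity) (by positivity)]
  field_simp
  ring

lemma abs_mul_sub_div_le {c s L θ M R : ℝ} (hc : 0 ≤ c) (hs : 0 ≤ s) (hθ : 0 < θ)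
    (hL : |L * s| ≤ M) (hR : s ≤ R) : |c * (s * L - s / θ)| ≤ c * (M + R / θ) := by
  rw [abs_mul, abs_of_nonneg hc]
  gcongr
  calc |s * L - s / θ| ≤ |s * L| + |s / θ| := abs_sub _ _
    _ ≤ M + R / θ := by
      rw [mul_comm, abs_of_nonneg (div_nonneg hs hθ.le)]
      gcongr

lemma exists_abs_mul_sub_le {ι : Type*} {w : ι → ℝ} (a c : ℝ) (hw : ∃ M, ∀ i, |w i| ≤ M) :
    ∃ K, ∀ i, |a * (c - w i)| ≤ K := by
  obtain ⟨M, hM⟩ := hw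
  refine ⟨|a| * (|c| + M), fun i => ?_⟩
  rw [abs_mul]
  gcongr
  exact (abs_sub _ _).trans (by linarith [hM i])

theorem scale_model_B_robust_general
    (p p' : ℝ → ℝ) (hp : ∀ u, HasDerivAt p (p' u) u) (hppos : ∀ u, 0 < p u)
    (θ₀ α γ : ℝ) (hθ₀ : 0 < θ₀) (hα : 0 < α)
    (L : ℝ → ℝ)   -- x ↦ (∂/∂θ) log p(θ⁻¹x) at θ = θ₀
    (hL : ∀ x, HasDerivAt (fun θ : ℝ => Real.log (p (x / θ))) (L x) θ₀)
    -- (A.4)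
    (hA4 : ∃ M, ∀ x, |L x * (p (x / α) / p (x / θ₀)) ^ γ| ≤ M)
    -- (A.2) when γ > 0, or (A.3) when γ < 0
    (hA23 : (0 < γ ∧ ∃ M, ∀ x, p (x / α) / p (x / θ₀) ≤ M) ∨
            (γ < 0 ∧ ∃ M, ∀ x, p (x / θ₀) / p (x / α) ≤ M))
    (Ainv C : ℝ)   -- inverse of ∫ m''(θ₀,α) dP_{θ₀} and C = ∫ (p_α/p_{θ₀})^γ ṗ_{θ₀} dλ
    (w : ℝ → ℝ)
    (hw : ∀ x, w x = ((p (x / α) / α) / (p (x / θ₀) / θ₀)) ^ γ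
        * ((-(1 / θ₀ ^ 2) * (p (x / θ₀) + (x / θ₀) * p' (x / θ₀))) / (p (x / θ₀) / θ₀))) :
    (∃ M, ∀ x, |w x| ≤ M) ∧ (∃ K, ∀ x, |Ainv * (C - w x)| ≤ K) := by
  obtain ⟨M, hM⟩ := hA4
  obtain ⟨R, hR⟩ := exists_forall_div_rpow_le (fun _ => (hppos _).le) (fun _ => (hppos _).le) hA23
  have hw_bound : ∀ x, |w x| ≤ (θ₀ / α) ^ γ * (M + R / θ₀) := fun x => by
    have hLx := (hL x).unique (hasDerivAt_log_comp_div (hp _) (hppos _).ne' hθ₀.ne')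
    rw [hw x, scale_weighted_score_eq (hppos _) (hppos _) hθ₀ hα, ← hLx]
    exact abs_mul_sub_div_le (by positivity)
      (Real.rpow_nonneg (div_pos (hppos _) (hppos _)).le γ) hθ₀ (hM x) (hR x)
  exact ⟨⟨_, hw_bound⟩, exists_abs_mul_sub_le Ainv C ⟨_, hw_bound⟩⟩

/-- B-robustness for scale models: under (A.1), (A.4) and, according to the sign of `γ`,
(A.2) or (A.3), the weighted score `x ↦ (p_α(x)/p_{θ₀}(x))^γ · ṗ_{θ₀}(x)/p_{θ₀}(x)` is
bounded, hence the influence function `IF(x;T_α,P_{θ₀}) = A⁻¹(C − w(x))` is bounded. -/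
theorem scale_model_B_robust
    (p p' : ℝ → ℝ) (hp : ∀ u, HasDerivAt p (p' u) u) (hppos : ∀ u, 0 < p u)
    (θ₀ α γ : ℝ) (hθ₀ : 0 < θ₀) (hα : 0 < α) (hγ : γ ≠ 0)
    (L : ℝ → ℝ)   -- x ↦ (∂/∂θ) log p(θ⁻¹x) at θ = θ₀
    (hL : ∀ x, HasDerivAt (fun θ : ℝ => Real.log (p (x / θ))) (L x) θ₀)
    -- (A.1): ∫ |u ṗ(u)| du < ∞
    (hA1 : Integrable (fun u => u * p' u) MeasureTheory.volume)
    -- (A.4)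
    (hA4 : ∃ M, ∀ x, |L x * (p (x / α) / p (x / θ₀)) ^ γ| ≤ M)
    -- (A.2) when γ > 0, or (A.3) when γ < 0
    (hA23 : (0 < γ ∧ ∃ M, ∀ x, p (x / α) / p (x / θ₀) ≤ M) ∨
            (γ < 0 ∧ ∃ M, ∀ x, p (x / θ₀) / p (x / α) ≤ M))
    (Ainv C : ℝ)   -- inverse of ∫ m''(θ₀,α) dP_{θ₀} and C = ∫ (p_α/p_{θ₀})^γ ṗ_{θ₀} dλ
    (w : ℝ → ℝ)
    (hw : ∀ x, w x = ((p (x / α) / α) / (p (x / θ₀) / θ₀)) ^ γ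
        * ((-(1 / θ₀ ^ 2) * (p (x / θ₀) + (x / θ₀) * p' (x / θ₀))) / (p (x / θ₀) / θ₀))) :
    (∃ M, ∀ x, |w x| ≤ M) ∧ (∃ K, ∀ x, |Ainv * (C - w x)| ≤ K) :=
  scale_model_B_robust_general p p' hp hppos θ₀ α γ hθ₀ hα L hL hA4 hA23 Ainv C w hw
end

section
/- For the normal location model p(x) = (1/√(2π))e^{−x²/2}, the function x ↦ (p(x−α)/p(x−θ₀))^γ · (x−θ₀) is unbounded on ℝ for every γ ∈ ℝ and every α ≠ θ₀ as well as for α = θ₀; consequently no dual φ_γ-divergence estimator of the normal mean is B-robust. -/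
/-!
Shifting the variable by `θ₀` and writing `a = α − θ₀`, the likelihood ratio of two normal
densities is `exp (a y − a²/2)`, so the weighted score becomes `y ↦ exp (c y + d) · y` with
`c = γ a`. Along the half-line on which `c y ≥ 0` the exponential factor stays above `exp d`,
so the weighted score grows at least linearly there.
-/

open Real

lemma exists_mul_nonneg_abs_eq (c : ℝ) {t : ℝ} (ht : 0 ≤ t) : ∃ x, 0 ≤ c * x ∧ |x| = t := by
  rcases le_total 0 c with hc | hc
  · exact ⟨t, mul_nonneg hc ht, abs_of_nonneg ht⟩
  · exact ⟨-t, by nlinarith, by rw [abs_neg, abs_of_nonneg ht]⟩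

lemma exp_mul_abs_le_abs_exp_mul_add_mul {c x : ℝ} (d : ℝ) (h : 0 ≤ c * x) :
    exp d * |x| ≤ |exp (c * x + d) * x| := by
  rw [abs_mul, abs_exp]
  gcongr
  linarith

theorem not_exists_abs_exp_mul_add_mul_le (c d : ℝ) :
    ¬ ∃ M : ℝ, ∀ x : ℝ, |exp (c * x + d) * x| ≤ M := by
  rintro ⟨M, hM⟩
  obtain ⟨x, hcx, hx⟩ := exists_mul_nonneg_abs_eq c (t := (|M| + 1) / exp d) (by positivity)
  have hlow : |M| + 1 ≤ |exp (c * x + d) * x| := by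
    calc |M| + 1 = exp d * |x| := by rw [hx]; field_simp
      _ ≤ _ := exp_mul_abs_le_abs_exp_mul_add_mul d hcx
  linarith [hM x, le_abs_self M]

lemma normal_density_shift_div {p : ℝ → ℝ}
    (hp : ∀ x, p x = (1 / Real.sqrt (2 * π)) * Real.exp (-x ^ 2 / 2)) (a y : ℝ) :
    p (y - a) / p y = exp (a * y - a ^ 2 / 2) := by
  have hsqrt : 0 < Real.sqrt (2 * π) := Real.sqrt_pos.mpr (by positivity)
  rw [hp, hp, mul_div_mul_left _ _ (by positivity), ← exp_sub]
  ring_nf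

/-- For the normal location model `p(x) = (1/√(2π))·exp(−x²/2)`, the weighted score
`x ↦ (p(x−α)/p(x−θ₀))^γ · (x−θ₀)` is unbounded on `ℝ` for every `γ, α, θ₀`; hence no
dual `φ_γ`-divergence estimator of the normal mean is B-robust. -/
theorem normal_location_weighted_score_unbounded
    (p : ℝ → ℝ) (hp : ∀ x, p x = (1 / Real.sqrt (2 * π)) * Real.exp (-x ^ 2 / 2)) :
    ∀ γ α θ₀ : ℝ, ¬ ∃ M : ℝ, ∀ x : ℝ,
      |(p (x - α) / p (x - θ₀)) ^ γ * (x - θ₀)| ≤ M := by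
  intro γ α θ₀ ⟨M, hM⟩
  set a := α - θ₀
  refine not_exists_abs_exp_mul_add_mul_le (γ * a) (-(γ * a ^ 2 / 2)) ⟨M, fun y => ?_⟩
  have hweight : (p (y + θ₀ - α) / p y) ^ γ = exp (γ * a * y + -(γ * a ^ 2 / 2)) := by
    rw [show y + θ₀ - α = y - a by ring, normal_density_shift_div hp, ← exp_mul]
    ring_nf
  simpa only [add_sub_cancel_right, hweight] using hM (y + θ₀)
end
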